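/- No 8-cycle (Hamiltonian cycle) of K_{2,2,1,1,1,1} lies in all 16 canonical H₈-subgraphs: in any Hamiltonian cycle some vertex of {a,b,x,y} is adjacent along the cycle to some vertex of {1,2,3,4}, and then the cycle is not contained in the H₈-subgraph whose top vertex is a vertex of the size-2 part not containing that vertex and whose middle vertices include both that vertex and its singleton neighbor. -/

import Mathlib

open SimpleGraph

/-- The graph `H₈`, obtained from `K₇` by a triangle-Y move: vertex `0` is the
top vertex, `1,2,3` the middle vertices, `4,5,6,7` the bottom vertices. -/
def H8 : SimpleGraph (Fin 8) where
  Adj u v := u ≠ v ∧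
    ((![0, 1, 1, 1, 2, 2, 2, 2] u = (0 : Fin 3) ∧ ![0, 1, 1, 1, 2, 2, 2, 2] v = (1 : Fin 3)) ∨
     (![0, 1, 1, 1, 2, 2, 2, 2] u = (1 : Fin 3) ∧ ![0, 1, 1, 1, 2, 2, 2, 2] v = (0 : Fin 3)) ∨
     (![0, 1, 1, 1, 2, 2, 2, 2] u = (1 : Fin 3) ∧ ![0, 1, 1, 1, 2, 2, 2, 2] v = (2 : Fin 3)) ∨
     (![0, 1, 1, 1, 2, 2, 2, 2] u = (2 : Fin 3) ∧ ![0, 1, 1, 1, 2, 2, 2, 2] v = (1 : Fin 3)) ∨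
     (![0, 1, 1, 1, 2, 2, 2, 2] u = (2 : Fin 3) ∧ ![0, 1, 1, 1, 2, 2, 2, 2] v = (2 : Fin 3)))
  symm := by constructor; intro u v h; exact ⟨h.1.symm, by tauto⟩
  loopless := by constructor; intro v h; exact h.1 rfl

/-- The vertex type of `K_{2,2,1,1,1,1}` with parts `{a,b}, {x,y}, {1},…,{4}`. -/
abbrev V221111 := Σ i, ![Fin 2, Fin 2, Fin 1, Fin 1, Fin 1, Fin 1] i

/-- The `a`-th vertex of the `i`-th size-2 part. -/
def vtx (i a : Fin 2) : V221111 := if i = 0 then ⟨0, a⟩ else ⟨1, a⟩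

/-- The vertex of the `j`-th singleton part. -/
def sing : Fin 4 → V221111 :=
  ![⟨2, (0 : Fin 1)⟩, ⟨3, (0 : Fin 1)⟩, ⟨4, (0 : Fin 1)⟩, ⟨5, (0 : Fin 1)⟩]

/-!
A Hamiltonian cycle visits both the size-2 parts and the singletons, so one of its edges joins
some `vtx i a` to some `sing j`. In an `H₈`-subgraph whose middle vertices are `vtx i 0`,
`vtx i 1`, `sing j`, both endpoints of that edge are middle vertices, and the middle vertices of
`H₈` are pairwise non-adjacent, so the edge is not the image of an edge of `H₈`.
-/

namespace SimpleGraph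

theorem Walk.exists_boundary_edge_of_mem_support {V : Type*} [DecidableEq V] {G : SimpleGraph V}
    {u v : V} (p : G.Walk u v) (S : Set V) {x y : V} (hx : x ∈ p.support) (hy : y ∈ p.support)
    (hxS : x ∈ S) (hyS : y ∉ S) : ∃ a b, s(a, b) ∈ p.edges ∧ a ∈ S ∧ b ∉ S := by
  by_cases hu : u ∈ S
  · obtain ⟨d, hd, hd₁, hd₂⟩ := (p.takeUntil y hy).exists_boundary_dart S hu hyS
    exact ⟨d.fst, d.snd, p.edges_takeUntil_subset_edges hy (List.mem_map_of_mem hd), hd₁, hd₂⟩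
  · obtain ⟨d, hd, hd₁, hd₂⟩ := (p.takeUntil x hx).exists_boundary_dart Sᶜ hu (not_not.mpr hxS)
    refine ⟨d.snd, d.fst, ?_, not_not.mp hd₂, hd₁⟩
    rw [Sym2.eq_swap]
    exact p.edges_takeUntil_subset_edges hx (List.mem_map_of_mem hd)

theorem IsIndepSet.mk_ne_map_of_mem_image {W V : Type*} {H : SimpleGraph W} {M : Set W}
    (hM : H.IsIndepSet M) {f : W → V} (hf : Function.Injective f) {x y : V} (hx : x ∈ f '' M)
    (hy : y ∈ f '' M) {e : Sym2 W} (he : e ∈ H.edgeSet) : s(x, y) ≠ Sym2.map f e := by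
  obtain ⟨u, hu, rfl⟩ := hx
  obtain ⟨v, hv, rfl⟩ := hy
  intro h
  rw [← Sym2.map_mk] at h
  obtain rfl := Sym2.map.injective hf h
  exact hM hu hv (H.ne_of_adj he) he

end SimpleGraph

instance : ∀ i, Fintype (![Fin 2, Fin 2, Fin 1, Fin 1, Fin 1, Fin 1] i)
  | 0 | 1 => inferInstanceAs (Fintype (Fin 2))
  | 2 | 3 | 4 | 5 => inferInstanceAs (Fintype (Fin 1))

instance : ∀ i, DecidableEq (![Fin 2, Fin 2, Fin 1, Fin 1, Fin 1, Fin 1] i)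
  | 0 | 1 => inferInstanceAs (DecidableEq (Fin 2))
  | 2 | 3 | 4 | 5 => inferInstanceAs (DecidableEq (Fin 1))

instance : DecidableRel H8.Adj := fun _ _ => inferInstanceAs (Decidable (_ ∧ _))

lemma card_V221111 : Fintype.card V221111 = 8 := rfl

lemma exists_eq_vtx_or_exists_eq_sing (v : V221111) : (∃ i a, v = vtx i a) ∨ ∃ j, v = sing j := by
  revert v; decide

lemma vtx_ne_sing (i a : Fin 2) (j : Fin 4) : vtx i a ≠ sing j := by
  revert i a j; decide

lemma H8_isIndepSet_middle : H8.IsIndepSet {1, 2, 3} := by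
  rintro _ (rfl | rfl | rfl) _ (rfl | rfl | rfl) <;> decide

/-- No Hamiltonian (8-)cycle of `K_{2,2,1,1,1,1}` lies in all 16 canonical
`H₈`-subgraphs: in any Hamiltonian cycle some vertex `vtx i a` of a size-2 part
is adjacent along the cycle to some singleton vertex `sing j`, and then the
cycle is not contained in any canonical `H₈`-subgraph whose top vertex lies in
the other size-2 part and whose middle vertices are both vertices of the part
of `vtx i a` together with `sing j` (those middle vertices are non-adjacent in
`H₈`). -/
theorem stmt_16 :
    let G := completeMultipartiteGraph ![Fin 2, Fin 2, Fin 1, Fin 1, Fin 1, Fin 1]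
    ∀ (v : V221111) (c : G.Walk v v), c.IsCycle → c.length = 8 →
      ∃ (i a : Fin 2) (j : Fin 4),
        s(vtx i a, sing j) ∈ c.edges ∧
        ∀ (b : Fin 2) (f : H8 →g G), Function.Injective f →
          f 0 = vtx (1 - i) b →
          ({f 1, f 2, f 3} : Set V221111) = {vtx i 0, vtx i 1, sing j} →
          ¬ (∀ e ∈ c.edges, ∃ e' ∈ H8.edgeSet, e = Sym2.map f e') := by
  intro G v c hc hlen
  have hham : c.IsHamiltonianCycle :=
    Walk.isHamiltonianCycle_iff_isCycle_and_length_eq.mpr ⟨hc, hlen.trans card_V221111.symm⟩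
  obtain ⟨p, s, hps, ⟨i, a, rfl⟩, hs⟩ :=
    c.exists_boundary_edge_of_mem_support {w | ∃ i a, w = vtx i a}
      (hham.mem_support (vtx 0 0)) (hham.mem_support (sing 0)) ⟨0, 0, rfl⟩
      (by simp [Ne.symm (vtx_ne_sing _ _ _)])
  obtain ⟨j, rfl⟩ := (exists_eq_vtx_or_exists_eq_sing s).resolve_left hs
  refine ⟨i, a, j, hps, fun _ f hf _ hmid hall => ?_⟩
  obtain ⟨e, he, heq⟩ := hall _ hps
  have himage : f '' {1, 2, 3} = {vtx i 0, vtx i 1, sing j} := by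
    rw [← hmid, Set.image_insert_eq, Set.image_insert_eq, Set.image_singleton]
  refine H8_isIndepSet_middle.mk_ne_map_of_mem_image hf ?_ ?_ he heq <;> rw [himage]
  · fin_cases a <;> simp
  · simp
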